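/- Let J : ℝ^d → ℝ be twice continuously differentiable with L₃-Lipschitz Hessian, θ ∈ ℝ^d, g ∈ ℝ^d, H symmetric, and M ≥ L₃. Suppose ‖g - ∇J(θ)‖ ≤ ε and ‖H - ∇²J(θ)‖ ≤ √(L₃ε). Let h be a global minimizer of m(v) = gᵀv + (1/2)vᵀHv + (M/6)‖v‖³ with M = 30L₃ and ‖h‖ > (1/2)√(ε/L₃). Then J(θ) - J(θ + h) > (7/24)·L₃^{-1/2}·ε^{3/2}. -/

import Mathlib

open scoped RealInnerProductSpace
open Set

/-! Comparing the minimiser `h` of the cubic model with `-h` gives `⟪g, h⟫ ≤ 0`, and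
stationarity along the ray `t ↦ t • h` gives `⟪g, h⟫ + ⟪h, H h⟫ + (M/2)‖h‖³ = 0`; together
they bound the model's quadratic part by `-(M/4)‖h‖³`. The third-order Taylor bound for `J`
(Lipschitz Hessian), corrected by the gradient and Hessian errors, turns this into a decrease
of at least `(M/4 - L₃/6)‖h‖³ - ε‖h‖ - ½√(L₃ε)‖h‖²`, which for `M = 30 L₃` and
`‖h‖ > ½√(ε/L₃)` exceeds `(7/24) ε^{3/2} / √L₃`. -/

noncomputable def cubicModel {E : Type*} [NormedAddCommGroup E] [InnerProductSpace ℝ E]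
    (g : E) (H : E →L[ℝ] E) (M : ℝ) (v : E) : ℝ :=
  ⟪g, v⟫ + (1 / 2) * ⟪v, H v⟫ + (M / 6) * ‖v‖ ^ 3

lemma hasDerivAt_cubic (a b c t : ℝ) :
    HasDerivAt (fun s ↦ a * s + b * s ^ 2 + c * s ^ 3) (a + 2 * b * t + 3 * c * t ^ 2) t := by
  refine ((((hasDerivAt_id' t).const_mul a).add ((hasDerivAt_pow 2 t).const_mul b)).add
    ((hasDerivAt_pow 3 t).const_mul c)).congr_deriv ?_
  norm_num
  ring

lemma sub_le_sub_of_hasDerivAt_le {f g f' g' : ℝ → ℝ} {a b : ℝ} (hab : a ≤ b)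
    (hf : ∀ t, HasDerivAt f (f' t) t) (hg : ∀ t, HasDerivAt g (g' t) t)
    (hle : ∀ t ∈ Ioo a b, f' t ≤ g' t) : f b - f a ≤ g b - g a := by
  have hmono : MonotoneOn (fun t ↦ g t - f t) (Icc a b) := by
    refine monotoneOn_of_hasDerivWithinAt_nonneg (f' := fun t ↦ g' t - f' t) (convex_Icc a b)
      (fun t _ ↦ ((hg t).sub (hf t)).continuousAt.continuousWithinAt)
      (fun t _ ↦ ((hg t).sub (hf t)).hasDerivWithinAt) fun t ht ↦ ?_
    rw [interior_Icc] at ht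
    exact sub_nonneg.2 (hle t ht)
  have := hmono (left_mem_Icc.2 hab) (right_mem_Icc.2 hab) hab
  simp only at this
  linarith

lemma le_taylor_cubic_of_second_deriv_le {φ φ' φ'' : ℝ → ℝ} {K : ℝ}
    (hφ : ∀ t, HasDerivAt φ (φ' t) t) (hφ' : ∀ t, HasDerivAt φ' (φ'' t) t)
    (hK : ∀ t ∈ Ioo (0 : ℝ) 1, φ'' t ≤ φ'' 0 + K * t) :
    φ 1 ≤ φ 0 + φ' 0 + φ'' 0 / 2 + K / 6 := by
  have hφ'_le : ∀ t ∈ Icc (0 : ℝ) 1, φ' t ≤ φ' 0 + φ'' 0 * t + K / 2 * t ^ 2 := by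
    intro t ht
    have := sub_le_sub_of_hasDerivAt_le ht.1 hφ' (hasDerivAt_cubic (φ'' 0) (K / 2) 0)
      fun s hs ↦ by linarith [hK s ⟨hs.1, hs.2.trans_le ht.2⟩]
    norm_num at this
    linarith
  have := sub_le_sub_of_hasDerivAt_le zero_le_one hφ
    (hasDerivAt_cubic (φ' 0) (φ'' 0 / 2) (K / 6))
    fun t ht ↦ by linarith [hφ'_le t (Ioo_subset_Icc_self ht)]
  norm_num at this
  linarith

section InnerProductSpace

variable {E : Type*} [NormedAddCommGroup E] [InnerProductSpace ℝ E]

lemma inner_le_inner_add_of_norm_sub_le {u g : E} {ε : ℝ} (hug : ‖u - g‖ ≤ ε) (h : E) :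
    ⟪u, h⟫ ≤ ⟪g, h⟫ + ε * ‖h‖ := by
  have := real_inner_le_norm (u - g) h
  rw [inner_sub_left] at this
  nlinarith [norm_nonneg h]

lemma inner_apply_le_inner_apply_add_of_norm_sub_le {A B : E →L[ℝ] E} {σ : ℝ}
    (hAB : ‖A - B‖ ≤ σ) (h : E) : ⟪A h, h⟫ ≤ ⟪B h, h⟫ + σ * ‖h‖ ^ 2 := by
  have hle : ‖A h - B h‖ ≤ σ * ‖h‖ :=
    ((A - B).le_opNorm h).trans (mul_le_mul_of_nonneg_right hAB (norm_nonneg h))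
  linarith [inner_le_inner_add_of_norm_sub_le hle h]

section CubicModel

lemma cubicModel_smul (g : E) (H : E →L[ℝ] E) (M : ℝ) (h : E) (t : ℝ) :
    cubicModel g H M (t • h) =
      t * ⟪g, h⟫ + t ^ 2 / 2 * ⟪h, H h⟫ + |t| ^ 3 * (M / 6 * ‖h‖ ^ 3) := by
  simp only [cubicModel, inner_smul_right, map_smul, inner_smul_left, norm_smul,
    Real.norm_eq_abs, RCLike.conj_to_real]
  ring

variable {g : E} {H : E →L[ℝ] E} {M : ℝ} {h : E}

lemma inner_nonpos_of_cubicModel_le (hmin : ∀ v, cubicModel g H M h ≤ cubicModel g H M v) :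
    ⟪g, h⟫ ≤ 0 := by
  have := hmin ((-1 : ℝ) • h)
  rw [cubicModel_smul] at this
  norm_num [cubicModel] at this
  linarith

lemma cubicModel_stationary_along_ray
    (hmin : ∀ v, cubicModel g H M h ≤ cubicModel g H M v) :
    ⟪g, h⟫ + ⟪h, H h⟫ + M / 2 * ‖h‖ ^ 3 = 0 := by
  have hray : ∀ t, 0 < t →
      cubicModel g H M (t • h) = ⟪g, h⟫ * t + ⟪h, H h⟫ / 2 * t ^ 2 + M / 6 * ‖h‖ ^ 3 * t ^ 3 :=
    fun t ht ↦ by rw [cubicModel_smul, abs_of_pos ht]; ring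
  have hloc : IsLocalMin
      (fun t ↦ ⟪g, h⟫ * t + ⟪h, H h⟫ / 2 * t ^ 2 + M / 6 * ‖h‖ ^ 3 * t ^ 3) 1 := by
    filter_upwards [Ioi_mem_nhds one_pos] with t ht
    rw [← hray 1 one_pos, ← hray t ht, one_smul]
    exact hmin _
  have := hloc.hasDerivAt_eq_zero (hasDerivAt_cubic _ _ _ 1)
  linarith

lemma quadratic_le_of_cubicModel_le (hmin : ∀ v, cubicModel g H M h ≤ cubicModel g H M v) :
    ⟪g, h⟫ + 1 / 2 * ⟪h, H h⟫ ≤ -(M / 4) * ‖h‖ ^ 3 := by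
  linarith [inner_nonpos_of_cubicModel_le hmin, cubicModel_stationary_along_ray hmin]

end CubicModel

variable [CompleteSpace E] {J : E → ℝ} {Hess : E → E →L[ℝ] E} {L : ℝ}

lemma le_taylor_cubic_of_lipschitz_hessian (hJ : Differentiable ℝ J)
    (hHess : ∀ x, HasFDerivAt (gradient J) (Hess x) x) {θ : E}
    (hLip : ∀ x, ‖Hess x - Hess θ‖ ≤ L * ‖x - θ‖) (h : E) :
    J (θ + h) ≤ J θ + ⟪gradient J θ, h⟫ + 1 / 2 * ⟪Hess θ h, h⟫ + L / 6 * ‖h‖ ^ 3 := by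
  have hγ : ∀ t : ℝ, HasDerivAt (fun t : ℝ ↦ θ + t • h) h t := fun t ↦ by
    simpa using ((hasDerivAt_id t).smul_const h).const_add θ
  have hφ : ∀ t, HasDerivAt (fun t ↦ J (θ + t • h)) ⟪gradient J (θ + t • h), h⟫ t :=
    fun t ↦ (hJ _).hasGradientAt.hasFDerivAt.comp_hasDerivAt t (hγ t)
  have hφ' : ∀ t, HasDerivAt (fun t ↦ ⟪gradient J (θ + t • h), h⟫)
      ⟪Hess (θ + t • h) h, h⟫ t := fun t ↦ by
    simpa using ((hHess _).comp_hasDerivAt t (hγ t)).inner ℝ (hasDerivAt_const t h)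
  have hK : ∀ t ∈ Ioo (0 : ℝ) 1,
      ⟪Hess (θ + t • h) h, h⟫ ≤ ⟪Hess (θ + (0 : ℝ) • h) h, h⟫ + L * ‖h‖ ^ 3 * t := by
    intro t ht
    have := inner_apply_le_inner_apply_add_of_norm_sub_le (hLip (θ + t • h)) h
    rw [add_sub_cancel_left, norm_smul, Real.norm_of_nonneg ht.1.le] at this
    rw [zero_smul, add_zero]
    linarith
  have := le_taylor_cubic_of_second_deriv_le hφ hφ' hK
  simp only [one_smul, zero_smul, add_zero] at this
  linarith

lemma sub_le_sub_of_cubicModel_le (hJ : Differentiable ℝ J)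
    (hHess : ∀ x, HasFDerivAt (gradient J) (Hess x) x) {θ g h : E}
    (hLip : ∀ x, ‖Hess x - Hess θ‖ ≤ L * ‖x - θ‖) {H : E →L[ℝ] E} {M ε σ : ℝ}
    (hg : ‖g - gradient J θ‖ ≤ ε) (hH : ‖H - Hess θ‖ ≤ σ)
    (hmin : ∀ v, cubicModel g H M h ≤ cubicModel g H M v) :
    (M / 4 - L / 6) * ‖h‖ ^ 3 - ε * ‖h‖ - σ / 2 * ‖h‖ ^ 2 ≤ J θ - J (θ + h) := by
  have hgrad := inner_le_inner_add_of_norm_sub_le ((norm_sub_rev _ _).trans_le hg) h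
  have hhess := inner_apply_le_inner_apply_add_of_norm_sub_le ((norm_sub_rev _ _).trans_le hH) h
  rw [real_inner_comm h (H h)] at hhess
  linarith [le_taylor_cubic_of_lipschitz_hessian hJ hHess hLip h,
    quadratic_le_of_cubicModel_le hmin]

end InnerProductSpace

lemma large_step_bound {ε L r : ℝ} (hε : 0 < ε) (hL : 0 < L)
    (hr : 1 / 2 * Real.sqrt (ε / L) < r) :
    7 / 24 * ε ^ ((3 : ℝ) / 2) / Real.sqrt L
      < (30 * L / 4 - L / 6) * r ^ 3 - ε * r - Real.sqrt (L * ε) / 2 * r ^ 2 := by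
  set s := Real.sqrt (ε / L) with hs
  have hs0 : 0 < s := Real.sqrt_pos.2 (div_pos hε hL)
  have hε_eq : ε = L * s ^ 2 := by
    rw [hs, Real.sq_sqrt (div_pos hε hL).le]
    field_simp
  have hσ_eq : Real.sqrt (L * ε) = L * s := by
    rw [hε_eq, show L * (L * s ^ 2) = (L * s) ^ 2 by ring, Real.sqrt_sq (by positivity)]
  have hrhs : ε ^ ((3 : ℝ) / 2) / Real.sqrt L = L * s ^ 3 := by
    have hsqrt : Real.sqrt ε = Real.sqrt L * s := by
      rw [hε_eq, Real.sqrt_mul hL.le, Real.sqrt_sq hs0.le]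
    rw [show ((3 : ℝ) / 2) = 1 + 1 / 2 by norm_num, Real.rpow_add hε, Real.rpow_one,
      ← Real.sqrt_eq_rpow, hsqrt, hε_eq]
    field_simp [(Real.sqrt_pos.2 hL).ne']
  have hr0 : 0 < r := by linarith
  rw [mul_div_assoc, hrhs, hσ_eq, hε_eq]
  -- the difference of the two sides is `L (2r - s) (88 r² + 38 r s + 7 s²) / 24`
  nlinarith [mul_pos hL (mul_pos (by linarith : 0 < 2 * r - s)
    (by positivity : 0 < 88 * r ^ 2 + 38 * r * s + 7 * s ^ 2))]

theorem descent_in_large_step_regime_general (d : ℕ) (ε L₃ : ℝ)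
    (hε : 0 < ε) (hL : 0 < L₃)
    (J : EuclideanSpace ℝ (Fin d) → ℝ) (hJ : ContDiff ℝ 2 J)
    (Hess : EuclideanSpace ℝ (Fin d) →
      EuclideanSpace ℝ (Fin d) →L[ℝ] EuclideanSpace ℝ (Fin d))
    (hHess : ∀ x, HasFDerivAt (gradient J) (Hess x) x)
    (hLip : ∀ x y, ‖Hess x - Hess y‖ ≤ L₃ * ‖x - y‖)
    (θ g : EuclideanSpace ℝ (Fin d))
    (H : EuclideanSpace ℝ (Fin d) →L[ℝ] EuclideanSpace ℝ (Fin d))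
    (M : ℝ) (hM : M = 30 * L₃)
    (hg : ‖g - gradient J θ‖ ≤ ε)
    (hHerr : ‖H - Hess θ‖ ≤ Real.sqrt (L₃ * ε))
    (h : EuclideanSpace ℝ (Fin d))
    (hmin : ∀ v : EuclideanSpace ℝ (Fin d),
      ⟪g, h⟫ + (1 / 2) * ⟪h, H h⟫ + (M / 6) * ‖h‖ ^ 3
        ≤ ⟪g, v⟫ + (1 / 2) * ⟪v, H v⟫ + (M / 6) * ‖v‖ ^ 3)
    (hlarge : ‖h‖ > (1 / 2) * Real.sqrt (ε / L₃)) :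
    J θ - J (θ + h) > (7 / 24) * ε ^ ((3 : ℝ) / 2) / Real.sqrt L₃ := by
  have hdescent := sub_le_sub_of_cubicModel_le (hJ.differentiable two_ne_zero) hHess
    (fun x ↦ hLip x θ) hg hHerr hmin
  rw [hM] at hdescent
  linarith [large_step_bound hε hL hlarge]

theorem descent_in_large_step_regime (d : ℕ) (hd : 0 < d) (ε L₃ : ℝ)
    (hε : 0 < ε) (hL : 0 < L₃)
    (J : EuclideanSpace ℝ (Fin d) → ℝ) (hJ : ContDiff ℝ 2 J)
    (Hess : EuclideanSpace ℝ (Fin d) →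
      EuclideanSpace ℝ (Fin d) →L[ℝ] EuclideanSpace ℝ (Fin d))
    (hHess : ∀ x, HasFDerivAt (gradient J) (Hess x) x)
    (hLip : ∀ x y, ‖Hess x - Hess y‖ ≤ L₃ * ‖x - y‖)
    (θ g : EuclideanSpace ℝ (Fin d))
    (H : EuclideanSpace ℝ (Fin d) →L[ℝ] EuclideanSpace ℝ (Fin d))
    (hHsym : IsSelfAdjoint H) (M : ℝ) (hML : M ≥ L₃) (hM : M = 30 * L₃)
    (hg : ‖g - gradient J θ‖ ≤ ε)
    (hHerr : ‖H - Hess θ‖ ≤ Real.sqrt (L₃ * ε))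
    (h : EuclideanSpace ℝ (Fin d))
    (hmin : ∀ v : EuclideanSpace ℝ (Fin d),
      ⟪g, h⟫ + (1 / 2) * ⟪h, H h⟫ + (M / 6) * ‖h‖ ^ 3
        ≤ ⟪g, v⟫ + (1 / 2) * ⟪v, H v⟫ + (M / 6) * ‖v‖ ^ 3)
    (hlarge : ‖h‖ > (1 / 2) * Real.sqrt (ε / L₃)) :
    J θ - J (θ + h) > (7 / 24) * ε ^ ((3 : ℝ) / 2) / Real.sqrt L₃ :=
  descent_in_large_step_regime_general d ε L₃ hε hL J hJ Hess hHess hLip θ g H M hM hg hHerr h hmin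
    hlarge
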